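/- Let V be a ℤ/2ℤ-vector space with an alternating bilinear form ⟨·,·⟩, and q, q' two quadratic refinements of ⟨·,·⟩ (i.e., q(x+y) = q(x)+q(y)+⟨x,y⟩ and similarly for q'). If q ≠ q', then there exists a transvection-preserving discrepancy: there is α ∈ V with q(α) = 1 and q'(α) = 0 (after possibly swapping q and q'), and for such α the transvection T_α satisfies q∘T_α = q but q'∘T_α ≠ q'. Hence O_q ≠ O_{q'} as subgroups of GL(V). -/
import Mathlib

section Aux

variable {V : Type*} [AddCommGroup V] [Module (ZMod 2) V]

private lemma zmod2_cases (a : ZMod 2) : a = 0 ∨ a = 1 := by revert a; decide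

private lemma aux_key
    (B : V →ₗ[ZMod 2] V →ₗ[ZMod 2] ZMod 2)
    (halt : ∀ x : V, B x x = 0)
    (hnondeg : ∀ v : V, v ≠ 0 → ∃ w : V, B v w ≠ 0)
    (q q' : V → ZMod 2)
    (hq : ∀ x y : V, q (x + y) = q x + q y + B x y)
    (hq' : ∀ x y : V, q' (x + y) = q' x + q' y + B x y)
    (α : V) (h1 : q α = 1) (h0 : q' α = 0) :
    ((∀ x : V, q (x + B x α • α) = q x) ∧ (∃ x : V, q' (x + B x α • α) ≠ q' x)) ∧
    {φ : V ≃ₗ[ZMod 2] V | ∀ x : V, q (φ x) = q x} ≠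
      {φ : V ≃ₗ[ZMod 2] V | ∀ x : V, q' (φ x) = q' x} := by
  have hq0 : q 0 = 0 := by
    have h := hq 0 0
    simp only [add_zero, map_zero, LinearMap.zero_apply] at h
    nth_rewrite 1 [← add_zero (q 0)] at h
    exact (add_left_cancel h).symm
  have hsymm : ∀ x y : V, B x y = B y x := by
    intro x y
    have h := halt (x + y)
    simp [map_add, halt] at h
    have : B x y = -(B y x) := by linear_combination h
    simpa [neg_eq_iff_add_eq_zero, CharTwo.neg_eq] using this
  have hαne : α ≠ 0 := by rintro rfl; rw [hq0] at h1; exact one_ne_zero h1.symm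
  -- preservation of q
  have hpres : ∀ x : V, q (x + B x α • α) = q x := by
    intro x
    rcases zmod2_cases (B x α) with h | h
    · simp [h]
    · have h2 : (1 : ZMod 2) + 1 = 0 := rfl
      rw [h, one_smul, hq x α, h1, h, add_assoc, h2, add_zero]
  -- discrepancy for q'
  obtain ⟨w, hw⟩ := hnondeg α hαne
  have hwα : B w α = 1 := by
    rw [hsymm w α]; rcases zmod2_cases (B α w) with h | h
    · exact absurd h hw
    · exact h
  have hdisc : q' (w + B w α • α) ≠ q' w := by
    rw [hwα, one_smul, hq' w α, h0, hwα]
    intro h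
    have : (1 : ZMod 2) = 0 := by linear_combination h
    exact one_ne_zero this
  refine ⟨⟨hpres, w, hdisc⟩, ?_⟩
  -- the transvection as a linear equivalence
  set f : V →ₗ[ZMod 2] V := LinearMap.id + LinearMap.smulRight (B.flip α) α with hf
  have hfx : ∀ x : V, f x = x + B x α • α := fun x => rfl
  have hinv : Function.Involutive f := by
    intro x
    rw [hfx, hfx]
    have hB : B (x + B x α • α) α = B x α := by
      simp [map_add, map_smul, halt]
    rw [map_add] at hB ⊢
    simp [map_smul, halt, add_assoc, ← add_smul, CharTwo.add_self_eq_zero]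
  set φ : V ≃ₗ[ZMod 2] V := LinearEquiv.ofInvolutive f hinv with hφ
  have hφx : ∀ x : V, φ x = x + B x α • α := fun x => rfl
  intro hsets
  have hmem : φ ∈ {ψ : V ≃ₗ[ZMod 2] V | ∀ x : V, q (ψ x) = q x} := by
    intro x; rw [hφx]; exact hpres x
  rw [hsets] at hmem
  exact hdisc (by rw [← hφx]; exact hmem w)

end Aux

/-- If `q ≠ q'` are two quadratic refinements of a nondegenerate alternating form on
a `ZMod 2`-vector space, then (after possibly swapping `q` and `q'`) there is `α`
with `q α = 1`, `q' α = 0`, the transvection `T_α` preserves `q` but not `q'`;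
hence the subgroups `O_q` and `O_{q'}` of `GL(V)` differ. -/
theorem stmt_11 {V : Type*} [AddCommGroup V] [Module (ZMod 2) V]
    (B : V →ₗ[ZMod 2] V →ₗ[ZMod 2] ZMod 2)
    (halt : ∀ x : V, B x x = 0)
    (hnondeg : ∀ v : V, v ≠ 0 → ∃ w : V, B v w ≠ 0)
    (q q' : V → ZMod 2)
    (hq : ∀ x y : V, q (x + y) = q x + q y + B x y)
    (hq' : ∀ x y : V, q' (x + y) = q' x + q' y + B x y)
    (hne : q ≠ q') :
    (∃ α : V,
      (q α = 1 ∧ q' α = 0 ∧ (∀ x : V, q (x + B x α • α) = q x) ∧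
        (∃ x : V, q' (x + B x α • α) ≠ q' x)) ∨
      (q' α = 1 ∧ q α = 0 ∧ (∀ x : V, q' (x + B x α • α) = q' x) ∧
        (∃ x : V, q (x + B x α • α) ≠ q x))) ∧
    {φ : V ≃ₗ[ZMod 2] V | ∀ x : V, q (φ x) = q x} ≠
      {φ : V ≃ₗ[ZMod 2] V | ∀ x : V, q' (φ x) = q' x} := by
  obtain ⟨α, hα⟩ : ∃ α, q α ≠ q' α := by
    by_contra h
    push_neg at h
    exact hne (funext h)
  rcases zmod2_cases (q α) with h | h <;> rcases zmod2_cases (q' α) with h' | h'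
  · exact absurd (h.trans h'.symm) hα
  · obtain ⟨⟨hp, hd⟩, hs⟩ := aux_key B halt hnondeg q' q hq' hq α h' h
    exact ⟨⟨α, Or.inr ⟨h', h, hp, hd⟩⟩, hs.symm⟩
  · obtain ⟨⟨hp, hd⟩, hs⟩ := aux_key B halt hnondeg q q' hq hq' α h h'
    exact ⟨⟨α, Or.inl ⟨h, h', hp, hd⟩⟩, hs⟩
  · exact absurd (h.trans h'.symm) hα
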